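/- Let B be a unital complex *-algebra and h : B → ℂ a linear functional that is faithful in the sense that for b ∈ B, if h(b·c) = 0 for all c ∈ B then b = 0. Let ρ be an exponential one-parameter group on B satisfying the modular condition h(a·b) = h(ρ_i(b)·a) for all a, b ∈ B, and let π : B → B be a surjective linear map with h ∘ π = h. If π is multiplicative (π(ab) = π(a)π(b)), then π ∘ ρ_z = ρ_z ∘ π for all z ∈ ℂ; if π is anti-multiplicative (π(ab) = π(b)π(a)), then π ∘ ρ_z = ρ_{−z} ∘ π for all z ∈ ℂ. -/

import Mathlib

/-!
For fixed `b`, both sides of either identity are, as functions of `z`, finite sums of entire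
functions of exponential type times vectors, and they agree at `z = i, 2i, 3i, …`: at `z = i` by
the modular condition and faithfulness of `h` (tested against `π a`, using surjectivity), and
then at `z = n i` by the group law. Such functions are determined by these values: if `f` is
entire with `|f z| ≤ M exp (r |Im z|)` and vanishes at every `n i`, then `g z = f z exp (i r z)`
is bounded by `M` on the upper half-plane, and dividing out the zeros by Blaschke factors gives
`|g z| ≤ M ∏_{n ≤ N} |z - n i| / |z + n i|` there. The product tends to `0` because `∑ 1/n`
diverges, so `f` vanishes on the upper half-plane and hence everywhere.
-/

/-- A function `f : ℂ → ℂ` is of exponential type: it is entire and satisfies a bound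
`|f z| ≤ M * exp (r * |Im z|)`. -/
def ExpType (f : ℂ → ℂ) : Prop :=
  Differentiable ℂ f ∧
    ∃ M r : ℝ, 0 < M ∧ 0 < r ∧ ∀ z : ℂ, ‖f z‖ ≤ M * Real.exp (r * |z.im|)

/-- A function from `ℂ` into a complex vector space `V` is of finite exponential type if it is a
finite linear combination of functions of exponential type with coefficients in `V`. -/
def FinExpType {V : Type*} [AddCommGroup V] [Module ℂ V] (f : ℂ → V) : Prop :=
  ∃ (n : ℕ) (v : Fin n → V) (g : Fin n → ℂ → ℂ),
    (∀ j, ExpType (g j)) ∧ ∀ z : ℂ, f z = ∑ j, g j z • v j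

/-- A one-parameter group on a unital complex *-algebra `B`: a family of algebra automorphisms
`β z` with `β (y + z) = β y ∘ β z` and `star (β z b) = β (conj z) (star b)`. -/
def IsOneParamGroup {B : Type*} [Ring B] [Algebra ℂ B] [StarRing B] [StarModule ℂ B]
    (β : ℂ → (B ≃ₐ[ℂ] B)) : Prop :=
  (∀ y z : ℂ, ∀ b : B, β (y + z) b = β y (β z b)) ∧
    (∀ z : ℂ, ∀ b : B, star (β z b) = β (starRingEnd ℂ z) (star b))

/-- An exponential one-parameter group: a one-parameter group such that `z ↦ β z b` is of finite
exponential type for every `b`. -/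
def IsExpOneParamGroup {B : Type*} [Ring B] [Algebra ℂ B] [StarRing B] [StarModule ℂ B]
    (β : ℂ → (B ≃ₐ[ℂ] B)) : Prop :=
  IsOneParamGroup β ∧ ∀ b : B, FinExpType (fun z => β z b)

open Complex ComplexConjugate Filter Finset Topology

namespace ExpType

theorem zero : ExpType 0 :=
  ⟨differentiable_const 0, 1, 1, one_pos, one_pos, fun z => by simp [Real.exp_nonneg]⟩

theorem add {f g : ℂ → ℂ} (hf : ExpType f) (hg : ExpType g) : ExpType (f + g) := by
  obtain ⟨hfd, M, r, hM, hr, hfb⟩ := hf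
  obtain ⟨hgd, N, s, hN, hs, hgb⟩ := hg
  refine ⟨hfd.add hgd, M + N, r + s, by positivity, by positivity, fun z => ?_⟩
  calc ‖f z + g z‖ ≤ M * Real.exp (r * |z.im|) + N * Real.exp (s * |z.im|) :=
        (norm_add_le _ _).trans (add_le_add (hfb z) (hgb z))
    _ ≤ M * Real.exp ((r + s) * |z.im|) + N * Real.exp ((r + s) * |z.im|) := by
        gcongr <;> linarith
    _ = (M + N) * Real.exp ((r + s) * |z.im|) := by ring

theorem mul_const {f : ℂ → ℂ} (hf : ExpType f) (c : ℂ) : ExpType (fun z => f z * c) := by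
  obtain ⟨hfd, M, r, hM, hr, hfb⟩ := hf
  refine ⟨hfd.mul_const c, M * (‖c‖ + 1), r, by positivity, hr, fun z => ?_⟩
  rw [norm_mul]
  calc ‖f z‖ * ‖c‖ ≤ M * Real.exp (r * |z.im|) * (‖c‖ + 1) := by
        gcongr
        · exact hfb z
        · linarith
    _ = M * (‖c‖ + 1) * Real.exp (r * |z.im|) := by ring

theorem sub {f g : ℂ → ℂ} (hf : ExpType f) (hg : ExpType g) : ExpType (f - g) := by
  convert hf.add (hg.mul_const (-1)) using 1
  ext z; simp [sub_eq_add_neg]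

theorem comp_neg {f : ℂ → ℂ} (hf : ExpType f) : ExpType (fun z => f (-z)) := by
  obtain ⟨hfd, M, r, hM, hr, hfb⟩ := hf
  exact ⟨hfd.comp differentiable_neg, M, r, hM, hr, fun z => by simpa using hfb (-z)⟩

end ExpType

namespace FinExpType

variable {V W : Type*} [AddCommGroup V] [Module ℂ V] [AddCommGroup W] [Module ℂ W]

theorem map {F : ℂ → V} (hF : FinExpType F) (L : V →ₗ[ℂ] W) :
    FinExpType (fun z => L (F z)) := by
  obtain ⟨n, v, g, hg, hFg⟩ := hF
  exact ⟨n, fun j => L (v j), g, hg, fun z => by simp [hFg]⟩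

theorem comp_neg {F : ℂ → V} (hF : FinExpType F) : FinExpType (fun z => F (-z)) := by
  obtain ⟨n, v, g, hg, hFg⟩ := hF
  exact ⟨n, v, fun j z => g j (-z), fun j => (hg j).comp_neg, fun z => hFg (-z)⟩

theorem expType {f : ℂ → ℂ} (hf : FinExpType f) : ExpType f := by
  obtain ⟨n, v, g, hg, hfg⟩ := hf
  have hsum : f = ∑ j, fun z => g j z * v j := by
    ext z; simp [hfg]
  rw [hsum]
  exact Finset.sum_induction _ ExpType (fun _ _ => ExpType.add) ExpType.zero
    fun j _ => (hg j).mul_const (v j)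

end FinExpType

theorem Differentiable.dslope {h : ℂ → ℂ} (hh : Differentiable ℂ h) (a : ℂ) :
    Differentiable ℂ (dslope h a) :=
  differentiableOn_univ.mp <| (differentiableOn_dslope univ_mem).mpr hh.differentiableOn

theorem dslope_mul_sub_mul_sub {h : ℂ → ℂ} {a : ℂ} (h0 : h a = 0) (b w : ℂ) :
    dslope h a w * (w - b) * (w - a) = h w * (w - b) := by
  have := sub_smul_dslope h a w
  rw [h0, sub_zero, smul_eq_mul] at this
  rw [← this]; ring

theorem norm_sub_conj_pos {w a : ℂ} (hw : 0 ≤ w.im) (ha : 0 < a.im) : 0 < ‖w - conj a‖ := by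
  refine norm_pos_iff.mpr fun h' => ?_
  have := congrArg Complex.im h'
  simp only [sub_im, conj_im, sub_neg_eq_add, zero_im] at this
  linarith

theorem norm_sub_conj_of_im_eq_zero {w : ℂ} (hw : w.im = 0) (a : ℂ) :
    ‖w - conj a‖ = ‖w - a‖ := by
  rw [← norm_conj (w - a), map_sub, conj_eq_iff_im.mpr hw]

theorem tendsto_add_div_sub_atTop (c : ℝ) :
    Tendsto (fun R : ℝ => (R + c) / (R - c)) atTop (𝓝 1) := by
  have h : Tendsto (fun R : ℝ => 1 + 2 * c / (R - c)) atTop (𝓝 (1 + 0)) :=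
    tendsto_const_nhds.add
      (tendsto_const_nhds.div_atTop (tendsto_atTop_add_const_right _ _ tendsto_id))
  rw [add_zero] at h
  refine h.congr' ?_
  filter_upwards [eventually_gt_atTop c] with R hR
  field_simp [sub_ne_zero.mpr hR.ne']
  ring

/-- The Blaschke factor `(z - conj a) / (z - a)` has modulus one on the real axis and tends to one
on large half-circles, so the maximum principle on large half-discs applies. -/
theorem norm_dslope_mul_sub_conj_le {h : ℂ → ℂ} (hh : Differentiable ℂ h) {M : ℝ}
    (hM : ∀ z, 0 ≤ z.im → ‖h z‖ ≤ M) {a : ℂ} (ha : 0 < a.im) (h0 : h a = 0) {z : ℂ}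
    (hz : 0 ≤ z.im) : ‖dslope h a z * (z - conj a)‖ ≤ M := by
  set G : ℂ → ℂ := fun w => dslope h a w * (w - conj a)
  have hGle : ∀ w, 0 ≤ w.im → w ≠ a → ‖G w‖ ≤ M * (‖w - conj a‖ / ‖w - a‖) := by
    intro w hw hwa
    have hpos : 0 < ‖w - a‖ := norm_pos_iff.mpr (sub_ne_zero.mpr hwa)
    rw [mul_div_assoc', le_div_iff₀ hpos, ← norm_mul, dslope_mul_sub_mul_sub h0, norm_mul]
    gcongr
    exact hM w hw
  have hM0 : 0 ≤ M := (norm_nonneg _).trans (hM a ha.le)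
  have hbound : ∀ R, ‖z‖ + ‖a‖ < R → ‖G z‖ ≤ M * ((R + ‖a‖) / (R - ‖a‖)) := by
    intro R hR
    have hRa : 0 < R - ‖a‖ := by linarith [norm_nonneg z]
    have hR0 : R ≠ 0 := by linarith [norm_nonneg z, norm_nonneg a]
    have hratio : 1 ≤ (R + ‖a‖) / (R - ‖a‖) := by
      rw [one_le_div hRa]; linarith [norm_nonneg a]
    have hfr : ∀ w ∈ frontier (Metric.ball 0 R ∩ {w | 0 < w.im}),
        ‖G w‖ ≤ M * ((R + ‖a‖) / (R - ‖a‖)) := by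
      intro w hw
      rcases frontier_inter_subset _ _ hw with ⟨hws, hwi⟩ | ⟨_, hwi⟩
      · rw [frontier_ball _ hR0, mem_sphere_zero_iff_norm] at hws
        rw [closure_setOfPred_lt_im] at hwi
        have hwa : w ≠ a := by rintro rfl; linarith [norm_nonneg z]
        refine (hGle w hwi hwa).trans (mul_le_mul_of_nonneg_left ?_ hM0)
        refine div_le_div₀ (by linarith [norm_nonneg a]) ?_ hRa ?_
        · calc ‖w - conj a‖ ≤ ‖w‖ + ‖conj a‖ := norm_sub_le _ _
            _ = R + ‖a‖ := by rw [norm_conj, hws]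
        · linarith [norm_sub_norm_le w a]
      · rw [frontier_setOfPred_lt_im] at hwi
        have hwa : w ≠ a := by rintro rfl; exact ha.ne' hwi
        have := hGle w hwi.ge hwa
        rw [norm_sub_conj_of_im_eq_zero hwi,
          div_self (norm_pos_iff.mpr (sub_ne_zero.mpr hwa)).ne', mul_one] at this
        exact this.trans (le_mul_of_one_le_right hM0 hratio)
    have hGd : Differentiable ℂ G := (hh.dslope a).mul (differentiable_id.sub_const _)
    refine Complex.norm_le_of_forall_mem_frontier_norm_le
      (Metric.isBounded_ball.subset Set.inter_subset_left) hGd.diffContOnCl hfr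
      (Metric.isOpen_ball.inter_closure ⟨?_, ?_⟩)
    · rw [mem_ball_zero_iff]; linarith [norm_nonneg a]
    · rwa [closure_setOfPred_lt_im]
  have hlim := (tendsto_add_div_sub_atTop ‖a‖).const_mul M
  rw [mul_one] at hlim
  exact ge_of_tendsto hlim ((eventually_gt_atTop _).mono hbound)

theorem norm_le_mul_prod_of_eq_zero {h : ℂ → ℂ} (hh : Differentiable ℂ h) {M : ℝ}
    (hM : ∀ z, 0 ≤ z.im → ‖h z‖ ≤ M) {a : ℕ → ℂ} (ha : ∀ n, 0 < (a n).im)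
    (hinj : Function.Injective a) (h0 : ∀ n, h (a n) = 0) (N : ℕ) {z : ℂ} (hz : 0 ≤ z.im) :
    ‖h z‖ ≤ M * ∏ n ∈ range N, (‖z - a n‖ / ‖z - conj (a n)‖) := by
  induction N generalizing h a with
  | zero => simpa using hM z hz
  | succ N ih =>
    set g : ℂ → ℂ := fun w => dslope h (a 0) w * (w - conj (a 0))
    have hg : ∀ w, g w * (w - a 0) = h w * (w - conj (a 0)) :=
      dslope_mul_sub_mul_sub (h0 0) _
    have hg0 : ∀ n, g (a (n + 1)) = 0 := fun n => by
      have hne : a (n + 1) - a 0 ≠ 0 := sub_ne_zero.mpr (hinj.ne n.succ_ne_zero)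
      simpa [h0, hne] using hg (a (n + 1))
    have hgz := ih ((hh.dslope _).mul (differentiable_id.sub_const _))
      (fun w hw => norm_dslope_mul_sub_conj_le hh hM (ha 0) (h0 0) hw) (fun n => ha (n + 1))
      (hinj.comp (add_left_injective 1)) hg0
    have hpos := norm_sub_conj_pos hz (ha 0)
    have hhz : ‖h z‖ = ‖g z‖ * (‖z - a 0‖ / ‖z - conj (a 0)‖) := by
      rw [mul_div_assoc', eq_div_iff hpos.ne', ← norm_mul, ← norm_mul, hg]
    rw [hhz, prod_range_succ', ← mul_assoc]
    exact mul_le_mul_of_nonneg_right hgz (by positivity)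

theorem tendsto_prod_range_zero_of_le_one_sub_div {q : ℕ → ℝ} {κ : ℝ} (hκ : 0 < κ)
    (hq0 : ∀ n, 0 ≤ q n) (hq : ∀ n, q n ≤ 1 - κ / (n + 1)) :
    Tendsto (fun N => ∏ n ∈ range N, q n) atTop (𝓝 0) := by
  have hexp : Tendsto (fun N => Real.exp (-(κ * ∑ n ∈ range N, 1 / ((n : ℝ) + 1))))
      atTop (𝓝 0) :=
    Real.tendsto_exp_atBot.comp <| tendsto_neg_atTop_atBot.comp <|
      Real.tendsto_sum_range_one_div_nat_succ_atTop.const_mul_atTop hκ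
  refine tendsto_of_tendsto_of_tendsto_of_le_of_le tendsto_const_nhds hexp
    (fun N => prod_nonneg fun n _ => hq0 n) fun N => ?_
  calc ∏ n ∈ range N, q n ≤ ∏ n ∈ range N, Real.exp (-(κ / (n + 1))) :=
        prod_le_prod (fun n _ => hq0 n) fun n _ =>
          (hq n).trans (by linarith [Real.add_one_le_exp (-(κ / (n + 1)))])
    _ = Real.exp (-(κ * ∑ n ∈ range N, 1 / ((n : ℝ) + 1))) := by
        rw [← Real.exp_sum, mul_sum, ← sum_neg_distrib]
        simp [div_eq_mul_inv]

theorem exists_norm_div_norm_le_one_sub_div {z : ℂ} (hz : 0 < z.im) :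
    ∃ κ > 0, ∀ n : ℕ,
      ‖z - (n + 1) * I‖ / ‖z - conj ((n + 1) * I)‖ ≤ 1 - κ / (n + 1) := by
  refine ⟨z.im / (‖z‖ + 1) ^ 2, by positivity, fun n => ?_⟩
  set c : ℝ := n + 1
  have hc : 1 ≤ c := by simp [c]
  have hcI : ((n : ℂ) + 1) * I = c * I := by simp [c]
  have hconj : conj ((c : ℂ) * I) = -(c * I) := by simp
  rw [hcI, hconj, sub_neg_eq_add]
  set A := ‖z + c * I‖
  set B := ‖z - c * I‖
  have hsq : A ^ 2 - B ^ 2 = 4 * z.im * c := by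
    simp only [A, B, Complex.sq_norm, normSq_apply, add_re, sub_re, add_im, sub_im,
      re_ofReal_mul, im_ofReal_mul, I_re, I_im]
    ring
  have hA : A ≤ (‖z‖ + 1) * c := by
    calc A ≤ ‖z‖ + c := by
          simpa [abs_of_pos (by linarith : (0:ℝ) < c)] using norm_add_le z (c * I)
      _ ≤ (‖z‖ + 1) * c := by nlinarith [norm_nonneg z]
  have hA0 : 0 ≤ A := norm_nonneg _
  have hB0 : 0 ≤ B := norm_nonneg _
  have hApos : 0 < A := by nlinarith [mul_pos hz (by linarith : (0:ℝ) < c)]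
  have hBA : B ≤ A := by nlinarith
  -- `(A - B) A ≥ (A - B)(A + B) / 2 = 2 y c` dominates `κ A² / c ≤ y c`
  have hgap : 2 * z.im * c ≤ (A - B) * A := by nlinarith
  have hκ : z.im / (‖z‖ + 1) ^ 2 / c * A ^ 2 ≤ z.im * c := by
    have h1 : A ^ 2 ≤ (‖z‖ + 1) ^ 2 * c ^ 2 := by rw [← mul_pow]; gcongr
    calc z.im / (‖z‖ + 1) ^ 2 / c * A ^ 2
        ≤ z.im / (‖z‖ + 1) ^ 2 / c * ((‖z‖ + 1) ^ 2 * c ^ 2) := by gcongr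
      _ = z.im * c := by field_simp
  rw [div_le_iff₀ hApos]
  nlinarith

theorem eq_zero_of_norm_le_of_eq_zero_nat_succ_mul_I {h : ℂ → ℂ} (hh : Differentiable ℂ h)
    {M : ℝ} (hM : ∀ z, 0 ≤ z.im → ‖h z‖ ≤ M) (h0 : ∀ n : ℕ, h ((n + 1) * I) = 0) {z : ℂ}
    (hz : 0 < z.im) : h z = 0 := by
  obtain ⟨κ, hκ, hq⟩ := exists_norm_div_norm_le_one_sub_div hz
  have hprod :=
    (tendsto_prod_range_zero_of_le_one_sub_div hκ (fun _ => by positivity) hq).const_mul M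
  rw [mul_zero] at hprod
  have hinj : Function.Injective fun n : ℕ => ((n : ℂ) + 1) * I := fun m n hmn => by
    simpa using hmn
  refine norm_le_zero_iff.mp (ge_of_tendsto hprod (Eventually.of_forall fun N => ?_))
  exact norm_le_mul_prod_of_eq_zero hh hM (fun n => by simp [Nat.cast_add_one_pos]) hinj h0 N hz.le

theorem ExpType.eq_zero_of_eq_zero_nat_succ_mul_I {f : ℂ → ℂ} (hf : ExpType f)
    (h0 : ∀ n : ℕ, f ((n + 1) * I) = 0) : f = 0 := by
  obtain ⟨hfd, M, r, -, -, hfb⟩ := hf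
  set h : ℂ → ℂ := fun z => f z * exp (I * r * z)
  have hhd : Differentiable ℂ h := hfd.mul (differentiable_exp.comp (by fun_prop))
  have hM : ∀ z, 0 ≤ z.im → ‖h z‖ ≤ M := fun z hz => by
    have := hfb z
    rw [abs_of_nonneg hz] at this
    simpa [h, norm_exp, Real.exp_neg, ← div_eq_mul_inv, div_le_iff₀ (Real.exp_pos _)] using this
  have hUHP : ∀ z : ℂ, 0 < z.im → f z = 0 := fun z hz => by
    simpa [h] using
      eq_zero_of_norm_le_of_eq_zero_nat_succ_mul_I hhd hM (fun n => by simp [h, h0]) hz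
  have hev : f =ᶠ[𝓝 I] 0 :=
    eventually_of_mem ((isOpen_lt continuous_const continuous_im).mem_nhds (by simp)) hUHP
  exact funext fun z => (analyticOnNhd_univ_iff_differentiable.mpr hfd)
    |>.eqOn_zero_of_preconnected_of_eventuallyEq_zero isPreconnected_univ (Set.mem_univ I) hev
      (Set.mem_univ z)

theorem FinExpType.eq_of_eq_nat_succ_mul_I {V : Type*} [AddCommGroup V] [Module ℂ V]
    {F G : ℂ → V} (hF : FinExpType F) (hG : FinExpType G)
    (hFG : ∀ n : ℕ, F ((n + 1) * I) = G ((n + 1) * I)) : F = G := by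
  funext z
  rw [← sub_eq_zero, ← Module.forall_dual_apply_eq_zero_iff ℂ]
  intro φ
  have hφ := ((hF.map φ).expType.sub (hG.map φ).expType).eq_zero_of_eq_zero_nat_succ_mul_I
    fun n => by simp [hFG n]
  simpa using congrFun hφ z

theorem AlgEquiv.apply_zero_of_map_add {B : Type*} [Semiring B] [Algebra ℂ B]
    {β : ℂ → (B ≃ₐ[ℂ] B)} (hβ : ∀ y z b, β (y + z) b = β y (β z b)) (b : B) : β 0 b = b :=
  (β 0).injective (by simpa using (hβ 0 0 b).symm)

theorem iterate_eq_nat_mul {B : Type*} {β : ℂ → B → B}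
    (hβ : ∀ y z b, β (y + z) b = β y (β z b)) (hβ0 : ∀ b, β 0 b = b) (s : ℂ) (n : ℕ) :
    (β s)^[n] = β (n * s) := by
  induction n with
  | zero => funext b; simp [hβ0]
  | succ n ih =>
    funext b
    rw [Function.iterate_succ', Function.comp_apply, ih, ← hβ]
    push_cast; ring_nf

section Modular

variable {B : Type*} [Ring B] [Algebra ℂ B] {h : B →ₗ[ℂ] ℂ} {π : B →ₗ[ℂ] B}

theorem eq_of_forall_apply_mul_map_eq (hfaith : ∀ b : B, (∀ c : B, h (b * c) = 0) → b = 0)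
    (hsurj : Function.Surjective π) {x y : B} (hxy : ∀ a, h (x * π a) = h (y * π a)) :
    x = y := by
  refine sub_eq_zero.mp (hfaith _ fun c => ?_)
  obtain ⟨a, rfl⟩ := hsurj c
  rw [sub_mul, map_sub, hxy, sub_self]

theorem commute_of_modular_of_map_mul (hfaith : ∀ b : B, (∀ c : B, h (b * c) = 0) → b = 0)
    {σ : B → B} (hmod : ∀ a b, h (a * b) = h (σ b * a)) (hsurj : Function.Surjective π)
    (hπh : ∀ b, h (π b) = h b) (hmul : ∀ a b, π (a * b) = π a * π b) :
    Function.Commute π σ := fun b =>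
  eq_of_forall_apply_mul_map_eq hfaith hsurj fun a =>
    calc h (π (σ b) * π a) = h (a * b) := by rw [← hmul, hπh, ← hmod]
      _ = h (σ (π b) * π a) := by rw [← hπh, hmul, hmod]

theorem semiconj_of_modular_of_map_mul_rev
    (hfaith : ∀ b : B, (∀ c : B, h (b * c) = 0) → b = 0) {σ τ : B → B}
    (hmod : ∀ a b, h (a * b) = h (σ b * a)) (hστ : Function.LeftInverse σ τ)
    (hsurj : Function.Surjective π) (hπh : ∀ b, h (π b) = h b)
    (hanti : ∀ a b, π (a * b) = π b * π a) : Function.Semiconj π τ σ := fun b =>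
  eq_of_forall_apply_mul_map_eq hfaith hsurj fun a =>
    calc h (π (τ b) * π a) = h (b * a) := by rw [← hanti, hπh, hmod, hστ]
      _ = h (σ (π b) * π a) := by rw [← hπh, hanti, hmod]

end Modular

/-- Lemma 7.1 of the paper: let `h` be a faithful linear functional on a unital complex
*-algebra `B`, let `ρ` be an exponential one-parameter group satisfying the modular condition
`h (a * b) = h (ρ_i b * a)`, and let `π` be a surjective linear map preserving `h`. If `π` is
multiplicative then it commutes with every `ρ_z`; if `π` is anti-multiplicative then
`π ∘ ρ_z = ρ_{-z} ∘ π` for every `z`. -/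
theorem modular_group_commutes_with_h_preserving_maps
    {B : Type*} [Ring B] [Algebra ℂ B] [StarRing B] [StarModule ℂ B]
    (h : B →ₗ[ℂ] ℂ)
    (hfaith : ∀ b : B, (∀ c : B, h (b * c) = 0) → b = 0)
    (ρ : ℂ → (B ≃ₐ[ℂ] B)) (hρ : IsExpOneParamGroup ρ)
    (hmod : ∀ a b : B, h (a * b) = h (ρ Complex.I b * a))
    (π : B →ₗ[ℂ] B) (hsurj : Function.Surjective π)
    (hπh : ∀ b : B, h (π b) = h b) :
    ((∀ a b : B, π (a * b) = π a * π b) →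
        ∀ z : ℂ, ∀ b : B, π (ρ z b) = ρ z (π b)) ∧
    ((∀ a b : B, π (a * b) = π b * π a) →
        ∀ z : ℂ, ∀ b : B, π (ρ z b) = ρ (-z) (π b)) := by
  obtain ⟨⟨hadd, -⟩, hexp⟩ := hρ
  have hρ0 := AlgEquiv.apply_zero_of_map_add hadd
  have hiter : ∀ s (n : ℕ), (ρ s : B → B)^[n] = ρ (n * s) :=
    iterate_eq_nat_mul (β := fun z => ρ z) hadd hρ0
  refine ⟨fun hmul z b => ?_, fun hanti z b => ?_⟩
  · have hI := commute_of_modular_of_map_mul hfaith hmod hsurj hπh hmul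
    have hF := FinExpType.eq_of_eq_nat_succ_mul_I ((hexp b).map π) (hexp (π b)) fun n => by
      simpa only [hiter, Nat.cast_succ] using hI.iterate_right (n + 1) b
    exact congrFun hF z
  · have hI := semiconj_of_modular_of_map_mul_rev hfaith hmod
      (fun b => by rw [← hadd, add_neg_cancel, hρ0] : Function.LeftInverse (ρ I) (ρ (-I)))
      hsurj hπh hanti
    have hF := FinExpType.eq_of_eq_nat_succ_mul_I ((hexp b).comp_neg.map π) (hexp (π b))
      fun n => by
        simpa only [hiter, Nat.cast_succ, mul_neg] using hI.iterate_right (n + 1) b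
    simpa using congrFun hF (-z)
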